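/- arXiv:2603.19820 — 3 statements merged into one kernel-verified Lean document; each statement's English description precedes it below -/
import Mathlib

section
/- Let (U, ≤) be a linear order, let X, Y ⊆ U be finite sets, and let l = c_0 ≤ c_1 ≤ ⋯ ≤ c_b = u be a monotone sequence in U (b ≥ 1). Let J ⊆ {0, …, b−1} be a set of indices of 'skipped' child ranges, and suppose that for every j ∈ J the skip decision is sound, i.e. X ∩ [c_j, c_{j+1}) = Y ∩ [c_j, c_{j+1}). Then the global range-local symmetric difference is recovered exactly from the non-skipped children: Δ_{l,u}(X,Y) = ⋃_{j ∉ J} Δ_{c_j,c_{j+1}}(X,Y). -/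
/-!
The cuts `c 0 ≤ ⋯ ≤ c b` split `[l, u)` into the consecutive children `[c j, c (j+1))`, so the
range-local symmetric difference on `[l, u)` is the union of those on the children. A sound skip
is a child on which both replicas agree, so its contribution is empty and it can be dropped.
-/

/-- The range-local symmetric difference
`Δ_{l,u}(X,Y) = Δ(X ∩ [l,u), Y ∩ [l,u))` where `Δ(A,B) = (A \ B) ∪ (B \ A)`. -/
def rangeSymmDiff {U : Type*} [LinearOrder U] (X Y : Finset U) (l u : U) : Finset U :=
  ((X.filter fun x => l ≤ x ∧ x < u) \ (Y.filter fun x => l ≤ x ∧ x < u)) ∪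
    ((Y.filter fun x => l ≤ x ∧ x < u) \ (X.filter fun x => l ≤ x ∧ x < u))

open scoped symmDiff

theorem monotoneOn_Iic_of_le_succ {α : Type*} [Preorder α] {f : ℕ → α} {b : ℕ}
    (hf : ∀ i, i < b → f i ≤ f (i + 1)) : MonotoneOn f (Set.Iic b) :=
  monotoneOn_of_le_succ Set.ordConnected_Iic fun i _ _ hi => by
    simpa using hf i (Nat.lt_of_succ_le (by simpa using hi))

theorem Finset.biUnion_sdiff_of_forall_eq_empty {α β : Type*} [DecidableEq α] [DecidableEq β]
    (s J : Finset α) {f : α → Finset β} (hJ : ∀ j ∈ J, f j = ∅) :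
    (s \ J).biUnion f = s.biUnion f := by
  ext x
  simp only [Finset.mem_biUnion, Finset.mem_sdiff]
  refine ⟨fun ⟨j, ⟨hjs, _⟩, hx⟩ => ⟨j, hjs, hx⟩, fun ⟨j, hjs, hx⟩ => ⟨j, ⟨hjs, fun hjJ => ?_⟩, hx⟩⟩
  simp [hJ j hjJ] at hx

section rangeSymmDiff

variable {U : Type*} [LinearOrder U] (X Y : Finset U)

theorem rangeSymmDiff_eq_symmDiff (l u : U) :
    rangeSymmDiff X Y l u =
      (X.filter fun x => l ≤ x ∧ x < u) ∆ (Y.filter fun x => l ≤ x ∧ x < u) :=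
  rfl

theorem rangeSymmDiff_eq_empty_iff {l u : U} :
    rangeSymmDiff X Y l u = ∅ ↔
      (X.filter fun x => l ≤ x ∧ x < u) = (Y.filter fun x => l ≤ x ∧ x < u) := by
  rw [rangeSymmDiff_eq_symmDiff, Finset.symmDiff_eq_empty]

theorem mem_rangeSymmDiff {l u x : U} :
    x ∈ rangeSymmDiff X Y l u ↔ x ∈ Set.Ico l u ∧ x ∈ X ∆ Y := by
  simp only [rangeSymmDiff_eq_symmDiff, Finset.mem_symmDiff, Finset.mem_filter, Set.mem_Ico]
  tauto

theorem rangeSymmDiff_eq_biUnion_range (b : ℕ) {c : ℕ → U}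
    (hc : ∀ i, i < b → c i ≤ c (i + 1)) :
    rangeSymmDiff X Y (c 0) (c b) =
      (Finset.range b).biUnion fun j => rangeSymmDiff X Y (c j) (c (j + 1)) := by
  have hmono := monotoneOn_Iic_of_le_succ hc
  ext x
  simp only [Finset.mem_biUnion, Finset.mem_range, mem_rangeSymmDiff]
  constructor
  · rintro ⟨hx, hxXY⟩
    obtain ⟨j, hj, hxj⟩ := Set.mem_iUnion₂.1 (Ico_subset_biUnion_Ico b c hx)
    exact ⟨j, Finset.mem_range.1 hj, hxj, hxXY⟩
  · rintro ⟨j, hj, hxj, hxXY⟩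
    refine ⟨Set.Ico_subset_Ico ?_ ?_ hxj, hxXY⟩
    · exact hmono (Set.mem_Iic.2 (Nat.zero_le b)) (Set.mem_Iic.2 hj.le) (Nat.zero_le j)
    · exact hmono (Set.mem_Iic.2 hj) (Set.mem_Iic.2 le_rfl) hj

end rangeSymmDiff

theorem rangeSymmDiff_eq_biUnion_of_sound_skips_general {U : Type*} [LinearOrder U]
    (X Y : Finset U) (b : ℕ) (c : ℕ → U) (l u : U)
    (hl : c 0 = l) (hu : c b = u)
    (hc : ∀ i, i < b → c i ≤ c (i + 1))
    (J : Finset ℕ)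
    (hsound : ∀ j ∈ J,
      (X.filter fun x => c j ≤ x ∧ x < c (j + 1)) =
        (Y.filter fun x => c j ≤ x ∧ x < c (j + 1))) :
    rangeSymmDiff X Y l u =
      (Finset.range b \ J).biUnion (fun j => rangeSymmDiff X Y (c j) (c (j + 1))) := by
  subst hl hu
  rw [rangeSymmDiff_eq_biUnion_range X Y b hc, Finset.biUnion_sdiff_of_forall_eq_empty]
  exact fun j hj => (rangeSymmDiff_eq_empty_iff X Y).2 (hsound j hj)

/-- given monotone cuts `l = c 0 ≤ c 1 ≤ ⋯ ≤ c b = u` (b ≥ 1) and a set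
`J ⊆ {0, …, b-1}` of skipped child indices that are all sound
(`X ∩ [c j, c (j+1)) = Y ∩ [c j, c (j+1))` for `j ∈ J`), the local symmetric
difference on `[l,u)` is exactly the union over the non-skipped children. -/
theorem rangeSymmDiff_eq_biUnion_of_sound_skips {U : Type*} [LinearOrder U]
    (X Y : Finset U) (b : ℕ) (hb : 1 ≤ b) (c : ℕ → U) (l u : U)
    (hl : c 0 = l) (hu : c b = u)
    (hc : ∀ i, i < b → c i ≤ c (i + 1))
    (J : Finset ℕ) (hJ : J ⊆ Finset.range b)
    (hsound : ∀ j ∈ J,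
      (X.filter fun x => c j ≤ x ∧ x < c (j + 1)) =
        (Y.filter fun x => c j ≤ x ∧ x < c (j + 1))) :
    rangeSymmDiff X Y l u =
      (Finset.range b \ J).biUnion (fun j => rangeSymmDiff X Y (c j) (c (j + 1))) :=
  rangeSymmDiff_eq_biUnion_of_sound_skips_general X Y b c l u hl hu hc J hsound
end

section
/- For all natural numbers m, b, j with b ≥ 1, the difference of consecutive balanced cut positions ⌊(j+1)·m/b⌋ − ⌊j·m/b⌋ is equal to either ⌊m/b⌋ or ⌈m/b⌉. -/
/-! Adding `m` to any numerator `a` raises `⌊a/b⌋` by at least `⌊m/b⌋` and by at most `⌈m/b⌉`,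
and these two bounds differ by at most one; the `j`-th part size is the case `a = j·m`. -/

namespace Nat

theorem ceilDiv_le_div_add_one (m b : ℕ) : m ⌈/⌉ b ≤ m / b + 1 := by
  rcases b.eq_zero_or_pos with rfl | hb
  · simp
  · calc m ⌈/⌉ b = (m + b - 1) / b := ceilDiv_eq_add_pred_div m b
      _ ≤ (m + b) / b := Nat.div_le_div_right (Nat.sub_le _ _)
      _ = m / b + 1 := Nat.add_div_right m hb

theorem add_div_le_div_add_ceilDiv (a m b : ℕ) : (a + m) / b ≤ a / b + m ⌈/⌉ b := by
  rcases b.eq_zero_or_pos with rfl | hb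
  · simp
  · have ha : a < b * (a / b + 1) := Nat.lt_mul_div_succ a hb
    have hm : m ≤ b * (m ⌈/⌉ b) := le_smul_ceilDiv hb
    rw [← Nat.lt_succ_iff, Nat.div_lt_iff_lt_mul hb]
    linarith [Nat.mul_add b (a / b + 1) (m ⌈/⌉ b)]

theorem add_div_sub_div_eq_div_or_ceilDiv (a m b : ℕ) :
    (a + m) / b - a / b = m / b ∨ (a + m) / b - a / b = m ⌈/⌉ b := by
  have lower : a / b + m / b ≤ (a + m) / b := Nat.div_add_div_le_add_div
  have upper := add_div_le_div_add_ceilDiv a m b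
  have gap := ceilDiv_le_div_add_one m b
  omega

end Nat

theorem balanced_part_size_floor_or_ceil_general (m b j : ℕ) :
    (j + 1) * m / b - j * m / b = m / b ∨ (j + 1) * m / b - j * m / b = m ⌈/⌉ b := by
  rw [Nat.succ_mul]
  exact Nat.add_div_sub_div_eq_div_or_ceilDiv (j * m) m b

/-- for natural numbers `m, b, j` with `b ≥ 1`, the size
`⌊(j+1)·m/b⌋ − ⌊j·m/b⌋` of the `j`-th balanced part equals either `⌊m/b⌋` or
`⌈m/b⌉` (natural-number division rounding down resp. up, `⌈/⌉` is `Nat.ceilDiv`). -/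
theorem balanced_part_size_floor_or_ceil (m b j : ℕ) (hb : 1 ≤ b) :
    (j + 1) * m / b - j * m / b = m / b ∨ (j + 1) * m / b - j * m / b = m ⌈/⌉ b :=
  balanced_part_size_floor_or_ceil_general m b j
end

section
/- Let (U, ≤) be a linear order and let X ⊆ U be the disjoint union of finite sets S_0, S_1, …, S_{k-1} such that for all indices i < j, every element of S_i is strictly less than every element of S_j. Let r be a natural number and let i be the index such that Σ_{j < i} |S_j| ≤ r < Σ_{j ≤ i} |S_j|. Then the element of X of rank r equals the element of S_i of rank r − Σ_{j < i} |S_j|, i.e. Select_X(r) = Select_{S_i}(r − Σ_{j < i} |S_j|). -/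
/-! Sorting a union of blocks that lie in increasing order concatenates the sorted blocks, so the
entry of rank `r` of the concatenation sits in block `i` at offset `r - ∑_{j<i} |S j|`. -/

/-- `Select_X(r)`: the `(r+1)`-st smallest element of `X` (the element of rank `r`),
realized as the `r`-th entry of the sorted list of `X` (with a default value when
`r ≥ |X|`). -/
def finsetSelect {U : Type*} [LinearOrder U] [Inhabited U] (X : Finset U) (r : ℕ) : U :=
  (X.sort (· ≤ ·)).getD r default

namespace List

theorem length_flatMap_range {α : Type*} (L : ℕ → List α) (n : ℕ) :
    ((range n).flatMap L).length = ∑ j ∈ Finset.range n, (L j).length := by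
  simp [length_flatMap, Finset.sum_eq_multiset_sum, Multiset.range]

theorem getD_flatMap_range {α : Type*} (L : ℕ → List α) (d : α) {i k r : ℕ} (hi : i < k)
    (hlo : ∑ j ∈ Finset.range i, (L j).length ≤ r)
    (hhi : r < ∑ j ∈ Finset.range (i + 1), (L j).length) :
    ((range k).flatMap L).getD r d = (L i).getD (r - ∑ j ∈ Finset.range i, (L j).length) d := by
  obtain ⟨m, rfl⟩ := Nat.exists_eq_add_of_lt hi
  rw [Finset.sum_range_succ] at hhi
  rw [← length_flatMap_range] at hlo hhi ⊢
  rw [Nat.add_right_comm, range_add, range_succ, flatMap_append, flatMap_append,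
    getD_append _ _ _ _ (by simpa using hhi), getD_append_right _ _ _ _ hlo]
  simp

end List

namespace Finset

variable {α : Type*} [LinearOrder α]

theorem sort_union_of_forall_lt {s t : Finset α} (h : ∀ a ∈ s, ∀ b ∈ t, a < b) :
    (s ∪ t).sort (· ≤ ·) = s.sort (· ≤ ·) ++ t.sort (· ≤ ·) := by
  have hdisj : Disjoint s t :=
    disjoint_left.2 fun a ha ha' => (h a ha a ha').false
  have hperm : (s.sort (· ≤ ·) ++ t.sort (· ≤ ·)).Perm ((s ∪ t).sort (· ≤ ·)) := by
    rw [← Multiset.coe_eq_coe, ← Multiset.coe_add, sort_eq, sort_eq, sort_eq,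
      ← disjUnion_eq_union s t hdisj]
    rfl
  refine (List.Perm.eq_of_pairwise' ?_ (pairwise_sort _ _) hperm).symm
  exact List.pairwise_append.2 ⟨pairwise_sort _ _, pairwise_sort _ _,
    fun a ha b hb => (h a ((mem_sort _).1 ha) b ((mem_sort _).1 hb)).le⟩

theorem sort_biUnion_range_of_lt {k : ℕ} {S : ℕ → Finset α}
    (hS : ∀ i j, i < j → j < k → ∀ x ∈ S i, ∀ y ∈ S j, x < y) :
    ((range k).biUnion S).sort (· ≤ ·) = (List.range k).flatMap fun j => (S j).sort (· ≤ ·) := by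
  induction k with
  | zero => simp
  | succ n ih =>
    have hlast : ∀ x ∈ (range n).biUnion S, ∀ y ∈ S n, x < y := by
      simp only [mem_biUnion, mem_range]
      rintro x ⟨j, hj, hx⟩ y hy
      exact hS j n hj n.lt_add_one x hx y hy
    rw [range_add_one, biUnion_insert, union_comm, sort_union_of_forall_lt hlast,
      ih fun i j hij hj => hS i j hij (hj.trans n.lt_add_one), List.range_succ,
      List.flatMap_append, List.flatMap_singleton]

end Finset

/-- if `X` is the disjoint union of `S 0, …, S (k-1)` with every element
of `S i` strictly below every element of `S j` for `i < j`, and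
`Σ_{j<i} |S j| ≤ r < Σ_{j≤i} |S j|`, then
`Select_X(r) = Select_{S i}(r − Σ_{j<i} |S j|)`. -/
theorem select_eq_select_block {U : Type*} [LinearOrder U] [Inhabited U]
    (k : ℕ) (S : ℕ → Finset U) (X : Finset U)
    (hX : X = (Finset.range k).biUnion S)
    (hord : ∀ i j, i < j → j < k → ∀ x ∈ S i, ∀ y ∈ S j, x < y)
    (r : ℕ) (i : ℕ) (hi : i < k)
    (hlo : (∑ j ∈ Finset.range i, (S j).card) ≤ r)
    (hhi : r < ∑ j ∈ Finset.range (i + 1), (S j).card) :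
    finsetSelect X r = finsetSelect (S i) (r - ∑ j ∈ Finset.range i, (S j).card) := by
  simp only [← Finset.length_sort (α := U) (· ≤ ·)] at hlo hhi ⊢
  rw [finsetSelect, finsetSelect, hX, Finset.sort_biUnion_range_of_lt hord]
  exact List.getD_flatMap_range _ default hi hlo hhi
end
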